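/- Let G be a Menger algebra of rank n and H a strong subset of G that is also an l-ideal of G. Then R_H = R_X for every equivalence class X of R_H with X ≠ W_H. -/
import Mathlib


/-- Superassociativity of the (n+1)-ary Menger operation. -/
def SuperAssoc {G : Type*} (n : ℕ) (op : G → (Fin n → G) → G) : Prop :=
  ∀ (f : G) (g h : Fin n → G), op (op f g) h = op f (fun i => op (g i) h)

/-- The set `T_n(G)` of elementary translations. -/
inductive IsTranslation {G : Type*} (n : ℕ) (op : G → (Fin n → G) → G) : (G → G) → Prop
  | id : IsTranslation n op (fun x => x)
  | step (t : G → G) (ht : IsTranslation n op t) (a : G) (i : Fin n) (b : Fin n → G) :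
      IsTranslation n op (fun x => op a (Function.update b i (t x)))

/-- `ρ_H⟨a⟩ = {t ∈ T_n(G) | t(a) ∈ H}`. -/
def rhoSet {G : Type*} (n : ℕ) (op : G → (Fin n → G) → G) (H : Set G) (a : G) :
    Set (G → G) :=
  {t | IsTranslation n op t ∧ t a ∈ H}

/-- `ρ°_H⟨t⟩ = {a ∈ G | t(a) ∈ H}`. -/
def rhoCirc {G : Type*} (n : ℕ) (op : G → (Fin n → G) → G) (H : Set G) (t : G → G) :
    Set G :=
  {a | t a ∈ H}

/-- `W_H = {a ∈ G | ρ_H⟨a⟩ = ∅}`. -/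
def WH {G : Type*} (n : ℕ) (op : G → (Fin n → G) → G) (H : Set G) : Set G :=
  {a | rhoSet n op H a = ∅}

/-- `R_H = {(a,b) | ρ_H⟨a⟩ = ρ_H⟨b⟩}`. -/
def RH {G : Type*} (n : ℕ) (op : G → (Fin n → G) → G) (H : Set G) : G → G → Prop :=
  fun a b => rhoSet n op H a = rhoSet n op H b

/-- A subset `H` is strong. -/
def Strong {G : Type*} (n : ℕ) (op : G → (Fin n → G) → G) (H : Set G) : Prop :=
  ∀ a b : G, (rhoSet n op H a ∩ rhoSet n op H b).Nonempty →
    rhoSet n op H a = rhoSet n op H b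

private lemma trans_comp {G : Type*} {n : ℕ} {op : G → (Fin n → G) → G} {s t : G → G}
    (hs : IsTranslation n op s) (ht : IsTranslation n op t) :
    IsTranslation n op (fun x => s (t x)) := by
  induction hs with
  | id => exact ht
  | step s₁ hs₁ a i b ih => exact IsTranslation.step (fun x => s₁ (t x)) ih a i b

private lemma trans_mapsH {G : Type*} {n : ℕ} {op : G → (Fin n → G) → G} {H : Set G}
    (hid : ∀ (x : G) (h : Fin n → G), (∃ i, h i ∈ H) → op x h ∈ H)
    {s : G → G} (hs : IsTranslation n op s) {h : G} (hh : h ∈ H) : s h ∈ H := by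
  induction hs with
  | id => exact hh
  | step t ht a i b ih => exact hid a _ ⟨i, by simpa using ih⟩

theorem stmt8 {G : Type*} [Nonempty G] {n : ℕ} (hn : 1 ≤ n)
    (op : G → (Fin n → G) → G) (hop : SuperAssoc n op) (H : Set G) (hs : Strong n op H)
    (hid : ∀ (x : G) (h : Fin n → G), (∃ i, h i ∈ H) → op x h ∈ H)
    (X : Set G) (hX : ∃ a : G, X = {b | RH n op H a b}) (hXW : X ≠ WH n op H) :
    ∀ a b : G, RH n op H a b ↔ RH n op X a b := by

  obtain ⟨a₀, rfl⟩ := hX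
  -- ρ_H⟨a₀⟩ is nonempty
  have hne : (rhoSet n op H a₀).Nonempty := by
    rw [Set.nonempty_iff_ne_empty]
    intro hemp
    apply hXW
    ext c
    simp only [Set.mem_setOf_eq, RH, WH, hemp]
    constructor
    · intro h; exact h.symm
    · intro h; exact h.symm
  obtain ⟨s, hst, hsa₀⟩ := hne
  -- characterization of X
  have hXchar : ∀ c : G, (RH n op H a₀ c) ↔ s c ∈ H := by
    intro c
    constructor
    · intro h
      have : s ∈ rhoSet n op H c := h ▸ ⟨hst, hsa₀⟩
      exact this.2
    · intro h
      exact hs a₀ c ⟨s, ⟨hst, hsa₀⟩, ⟨hst, h⟩⟩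
  -- translations map H into H
  have hmap : ∀ {u : G → G}, IsTranslation n op u → ∀ {h : G}, h ∈ H → u h ∈ H := by
    intro u hu h hh; exact trans_mapsH hid hu hh
  -- backward key lemma: R_X implies containment of rhoSet H
  have key : ∀ a b : G, rhoSet n op {c | RH n op H a₀ c} a = rhoSet n op {c | RH n op H a₀ c} b →
      rhoSet n op H a ⊆ rhoSet n op H b := by
    intro a b hab t ht
    obtain ⟨htt, hta⟩ := ht
    have hu : IsTranslation n op (fun x => s (t x)) := trans_comp hst htt
    have hua : (fun x => s (t x)) ∈ rhoSet n op {c | RH n op H a₀ c} a := by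
      refine ⟨hu, ?_⟩
      simp only [Set.mem_setOf_eq]
      exact (hXchar _).2 (hmap hst (hmap hst hta))
    have hub : (fun x => s (t x)) ∈ rhoSet n op {c | RH n op H a₀ c} b := hab ▸ hua
    have hsstb : s (s (t b)) ∈ H := (hXchar _).1 hub.2
    -- strongness: ρ⟨t b⟩ = ρ⟨s a₀⟩
    have hss : IsTranslation n op (fun x => s (s x)) := trans_comp hst hst
    have heq : rhoSet n op H (t b) = rhoSet n op H (s a₀) :=
      hs (t b) (s a₀) ⟨fun x => s (s x), ⟨hss, hsstb⟩, ⟨hss, hmap hst (hmap hst hsa₀)⟩⟩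
    have : (fun x : G => x) ∈ rhoSet n op H (t b) := by
      rw [heq]; exact ⟨IsTranslation.id, hsa₀⟩
    exact ⟨htt, this.2⟩
  intro a b
  constructor
  · -- forward
    intro hab
    ext t
    simp only [rhoSet, Set.mem_setOf_eq]
    have main : ∀ c d : G, rhoSet n op H c = rhoSet n op H d → IsTranslation n op t →
        RH n op H a₀ (t c) → RH n op H a₀ (t d) := by
      intro c d hcd htt h
      unfold RH at h ⊢
      rw [h]
      ext w
      simp only [rhoSet, Set.mem_setOf_eq]
      constructor
      · rintro ⟨hwt, hw⟩
        refine ⟨hwt, ?_⟩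
        have : (fun x => w (t x)) ∈ rhoSet n op H c := ⟨trans_comp hwt htt, hw⟩
        exact (hcd ▸ this).2
      · rintro ⟨hwt, hw⟩
        refine ⟨hwt, ?_⟩
        have : (fun x => w (t x)) ∈ rhoSet n op H d := ⟨trans_comp hwt htt, hw⟩
        exact (hcd.symm ▸ this).2
    constructor
    · rintro ⟨htt, h⟩; exact ⟨htt, main a b hab htt h⟩
    · rintro ⟨htt, h⟩; exact ⟨htt, main b a hab.symm htt h⟩
  · -- backward
    intro hab
    exact Set.Subset.antisymm (key a b hab) (key b a hab.symm)
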